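/- arXiv:2501.06266 — 2 statements merged into one kernel-verified Lean document; each statement's English description precedes it below -/
import Mathlib

section
/- If G is a nonnegative matrix indexed by a set β and v is a nonnegative vector satisfying the Lyapunov inequality G v ≤ v − h for a nonnegative vector h (componentwise), then for every n ≥ 0 the partial sum ∑_{k=0}^{n} G^k h ≤ v componentwise, and hence the infinite series ∑_{n=0}^{∞} G^n h converges componentwise with ∑_{n=0}^{∞} G^n h ≤ v. -/
open Filter Topology

/-- Lyapunov bound for nonnegative linear systems: if `G v ≤ v - h`
componentwise with `G, h, v` nonnegative, then all partial sums `∑_{k=0}^n G^k h ≤ v`,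
and the series `∑_n G^n h` converges componentwise with sum at most `v`. -/
theorem stmt0 {β : Type*} [Fintype β] [DecidableEq β]
    (G : Matrix β β ℝ) (hG : ∀ i j, 0 ≤ G i j)
    (h v : β → ℝ) (hh : ∀ i, 0 ≤ h i) (hv : ∀ i, 0 ≤ v i)
    (hLy : ∀ i, G.mulVec v i ≤ v i - h i) :
    (∀ n : ℕ, ∀ i, ∑ k ∈ Finset.range (n + 1), (G ^ k).mulVec h i ≤ v i) ∧
    (∀ i, Summable (fun n : ℕ => (G ^ n).mulVec h i) ∧
      ∑' n : ℕ, (G ^ n).mulVec h i ≤ v i) := by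
  have hGpow : ∀ n : ℕ, ∀ i j, 0 ≤ (G ^ n) i j := by
    intro n
    induction n with
    | zero => intro i j; rw [pow_zero, Matrix.one_apply]; positivity
    | succ n ih =>
      intro i j
      rw [pow_succ, Matrix.mul_apply]
      exact Finset.sum_nonneg fun k _ => mul_nonneg (ih i k) (hG k j)
  have hterm : ∀ n : ℕ, ∀ i, 0 ≤ (G ^ n).mulVec h i := fun n i =>
    Finset.sum_nonneg fun j _ => mul_nonneg (hGpow n i j) (hh j)
  have hGv : ∀ i, 0 ≤ G.mulVec v i := fun i =>
    Finset.sum_nonneg fun j _ => mul_nonneg (hG i j) (hv j)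
  have hbase : ∀ i, h i ≤ v i := fun i => by linarith [hLy i, hGv i]
  have key : ∀ n : ℕ, ∀ i, ∑ k ∈ Finset.range (n + 1), (G ^ k).mulVec h i ≤ v i := by
    intro n
    induction n with
    | zero =>
      intro i
      simpa [Matrix.one_mulVec] using hbase i
    | succ n ih =>
      intro i
      have hrec : ∑ k ∈ Finset.range (n + 2), (G ^ k).mulVec h i
          = h i + G.mulVec (fun j => ∑ k ∈ Finset.range (n + 1), (G ^ k).mulVec h j) i := by
        rw [Finset.sum_range_succ']
        simp only [pow_zero, Matrix.one_mulVec]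
        rw [add_comm]
        congr 1
        have step : ∀ k : ℕ, (G ^ (k + 1)).mulVec h i = G.mulVec ((G ^ k).mulVec h) i := by
          intro k
          rw [Matrix.mulVec_mulVec, ← pow_succ']
        calc ∑ k ∈ Finset.range (n + 1), (G ^ (k + 1)).mulVec h i
            = ∑ k ∈ Finset.range (n + 1), ∑ j, G i j * (G ^ k).mulVec h j := by
              refine Finset.sum_congr rfl fun k _ => ?_
              rw [step k]; rfl
          _ = ∑ j, G i j * ∑ k ∈ Finset.range (n + 1), (G ^ k).mulVec h j := by
              rw [Finset.sum_comm]
              simp [Finset.mul_sum]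
          _ = G.mulVec (fun j => ∑ k ∈ Finset.range (n + 1), (G ^ k).mulVec h j) i := rfl
      rw [hrec]
      have hmono : G.mulVec (fun j => ∑ k ∈ Finset.range (n + 1), (G ^ k).mulVec h j) i
          ≤ G.mulVec v i :=
        Finset.sum_le_sum fun j _ => mul_le_mul_of_nonneg_left (ih j) (hG i j)
      linarith [hLy i, hmono]
  refine ⟨key, fun i => ?_⟩
  have hb : ∀ n : ℕ, ∑ k ∈ Finset.range n, (G ^ k).mulVec h i ≤ v i := by
    intro n
    cases n with
    | zero => simpa using hv i
    | succ n => exact key n i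
  have hsummable : Summable (fun n : ℕ => (G ^ n).mulVec h i) :=
    summable_of_sum_range_le (fun n => hterm n i) hb
  exact ⟨hsummable, Summable.tsum_le_of_sum_range_le hsummable hb⟩
end

section
/- Let G be a nonnegative matrix on an index set Λ partitioned into blocks indexed 2 (a finite set K'), 3 (a finite set Ã), and 4 (the set A^c), with h a vector on Λ. Let κ = K' ∪ Ã and suppose G_{κκ}^n → 0, so 𝓘_{κκ} = (I − G_{κκ})^{-1} exists with row blocks 𝓘_2, 𝓘_3. Suppose u* = ∑_{n≥0} G^n h converges absolutely componentwise, and suppose there exist nonnegative vectors v, ν on β = Ã ∪ A^c satisfying G_{ββ} v ≤ v − |h_β| and G_{ββ} ν ≤ ν − G_{β2} w for a fixed positive weight vector w on K'. Let ũ be the vector equal to 𝓘_i h_κ on blocks i = 2,3 and 0 on A^c, and let ε = u* − ũ. If ‖𝓘_2 G_{24} ν_4‖_w < 1, then with m(h) = ‖𝓘_2 G_{24} v_4 + 𝓘_2 |h_2|‖_w / (1 − ‖𝓘_2 G_{24} ν_4‖_w), the componentwise bounds |ε_i| ≤ 𝓘_i G_{i4} v_4 + 𝓘_i G_{i4} ν_4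 · m(h) hold for i = 2,3, and |ε_4| ≤ v_4 + ν_4 · m(h). -/
/-!
Let `U = ∑ₙ |Gⁿ h|` and `M = ‖U₂‖_w`. Since `|Gⁿ⁺¹ h| ≤ G |Gⁿ h|`, the partial sums `Pₙ` of `U`
satisfy `Pₙ₊₁ ≤ |h| + G Pₙ`. As `M w` dominates `U` on `K'` and the Lyapunov inequalities make
`v + M ν` a supersolution on `β`, induction gives `U ≤ v + M ν` on `β`. On `κ` this yields
`U_κ ≤ |h_κ| + G_κκ U_κ + G_κ4 (v₄ + M ν₄)`, and since `𝓘 = ∑ G_κκⁿ` is nonnegative,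
`U_κ ≤ 𝓘 (|h_κ| + G_κ4 v₄ + M G_κ4 ν₄)`. Reading this on `K'` in the `w`-norm gives
`M ≤ ‖𝓘₂ G₂₄ v₄ + 𝓘₂ |h₂|‖_w + M ‖𝓘₂ G₂₄ ν₄‖_w`, i.e. `M ≤ m(h)`. Finally `u*` solves
`u = h + G u`, so `ε_κ = 𝓘 G_κ4 u*₄` with `|u*₄| ≤ U₄ ≤ v₄ + M ν₄`, and `ε₄ = u*₄`.
-/

open Filter Topology Matrix Finset

section RealSeries

variable {ι : Type*} {g f V : ι → ℝ}

theorem abs_tsum_le_tsum_abs (hf : Summable f) : |∑' i, f i| ≤ ∑' i, |f i| :=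
  norm_tsum_le_tsum_norm hf.norm

theorem summable_mul_abs (hg : ∀ i, 0 ≤ g i) (hf : Summable fun i => g i * f i) :
    Summable fun i => g i * |f i| :=
  hf.abs.congr fun i => by rw [abs_mul, abs_of_nonneg (hg i)]

theorem abs_tsum_mul_le_tsum_mul_abs (hg : ∀ i, 0 ≤ g i) (hf : Summable fun i => g i * f i) :
    |∑' i, g i * f i| ≤ ∑' i, g i * |f i| :=
  (abs_tsum_le_tsum_abs hf).trans_eq (tsum_congr fun i => by rw [abs_mul, abs_of_nonneg (hg i)])

theorem summable_mul_of_abs_le (hg : ∀ i, 0 ≤ g i) (hfV : ∀ i, |f i| ≤ V i)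
    (hV : Summable fun i => g i * V i) : Summable fun i => g i * f i :=
  hV.of_norm_bounded fun i => by
    rw [Real.norm_eq_abs, abs_mul, abs_of_nonneg (hg i)]
    exact mul_le_mul_of_nonneg_left (hfV i) (hg i)

theorem abs_tsum_mul_le_of_abs_le (hg : ∀ i, 0 ≤ g i) (hfV : ∀ i, |f i| ≤ V i)
    (hV : Summable fun i => g i * V i) : |∑' i, g i * f i| ≤ ∑' i, g i * V i :=
  have hf := summable_mul_of_abs_le hg hfV hV
  (abs_tsum_mul_le_tsum_mul_abs hg hf).trans <|
    (summable_mul_abs hg hf).tsum_le_tsum (fun i => mul_le_mul_of_nonneg_left (hfV i) (hg i)) hV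

theorem hasSum_of_equiv_sum_fintype {Λ K β : Type*} [Fintype K] (e : Λ ≃ K ⊕ β) {F : Λ → ℝ}
    {s : ℝ} (hs : HasSum (fun x => F (e.symm (Sum.inr x))) s) :
    HasSum F (∑ k, F (e.symm (Sum.inl k)) + s) :=
  e.symm.hasSum_iff.mp (HasSum.sum (hasSum_fintype _) hs)

end RealSeries

section Iterates

variable {Λ : Type*} {G : Λ → Λ → ℝ} {W : ℕ → Λ → ℝ}

theorem abs_iterate_succ_le (hG : ∀ x y, 0 ≤ G x y)
    (hWrec : ∀ n x, HasSum (fun y => G x y * W n y) (W (n + 1) x)) (n : ℕ) (x : Λ) :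
    |W (n + 1) x| ≤ ∑' y, G x y * |W n y| :=
  (hWrec n x).tsum_eq ▸ abs_tsum_mul_le_tsum_mul_abs (hG x) (hWrec n x).summable

theorem summable_mul_sum_range_abs_iterate (hG : ∀ x y, 0 ≤ G x y)
    (hWrec : ∀ n x, HasSum (fun y => G x y * W n y) (W (n + 1) x)) (n : ℕ) (x : Λ) :
    Summable fun y => G x y * ∑ i ∈ range n, |W i y| := by
  simp_rw [mul_sum]
  exact summable_sum fun i _ => summable_mul_abs (hG x) (hWrec i x).summable

theorem sum_range_succ_abs_iterate_le (hG : ∀ x y, 0 ≤ G x y)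
    (hWrec : ∀ n x, HasSum (fun y => G x y * W n y) (W (n + 1) x)) (n : ℕ) (x : Λ) :
    ∑ i ∈ range (n + 1), |W i x| ≤ |W 0 x| + ∑' y, G x y * ∑ i ∈ range n, |W i y| := by
  rw [sum_range_succ', add_comm]
  gcongr
  calc ∑ i ∈ range n, |W (i + 1) x| ≤ ∑ i ∈ range n, ∑' y, G x y * |W i y| :=
        sum_le_sum fun i _ => abs_iterate_succ_le hG hWrec i x
    _ = ∑' y, G x y * ∑ i ∈ range n, |W i y| := by
        simp_rw [mul_sum]
        exact (Summable.tsum_finsetSum fun i _ => summable_mul_abs (hG x) (hWrec i x).summable).symm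

theorem tsum_abs_iterate_le (hG : ∀ x y, 0 ≤ G x y)
    (hWrec : ∀ n x, HasSum (fun y => G x y * W n y) (W (n + 1) x))
    (habs : ∀ x, Summable fun n => |W n x|) (x : Λ)
    (hU : Summable fun y => G x y * ∑' n, |W n y|) :
    ∑' n, |W n x| ≤ |W 0 x| + ∑' y, G x y * ∑' n, |W n y| := by
  refine Real.tsum_le_of_sum_range_le (fun n => abs_nonneg _) fun n => ?_
  cases n with
  | zero =>
    simpa using add_nonneg (abs_nonneg _)
      (tsum_nonneg fun y => mul_nonneg (hG x y) (tsum_nonneg fun n => abs_nonneg (W n y)))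
  | succ n =>
    refine (sum_range_succ_abs_iterate_le hG hWrec n x).trans (add_le_add_right ?_ _)
    refine (summable_mul_sum_range_abs_iterate hG hWrec n x).tsum_le_tsum (fun y => ?_) hU
    exact mul_le_mul_of_nonneg_left
      ((habs y).sum_le_tsum _ fun i _ => abs_nonneg _) (hG x y)

theorem tsum_abs_iterate_le_of_supersolution (hG : ∀ x y, 0 ≤ G x y)
    (hWrec : ∀ n x, HasSum (fun y => G x y * W n y) (W (n + 1) x))
    (habs : ∀ x, Summable fun n => |W n x|) (S : Set Λ) (B : Λ → ℝ)
    (hB0 : ∀ x ∈ S, 0 ≤ B x) (hBsum : ∀ x ∈ S, Summable fun y => G x y * B y)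
    (hsuper : ∀ x ∈ S, |W 0 x| + ∑' y, G x y * B y ≤ B x)
    (hout : ∀ x ∉ S, ∑' n, |W n x| ≤ B x) (x : Λ) :
    ∑' n, |W n x| ≤ B x := by
  have hpartial : ∀ n x, ∑ i ∈ range n, |W i x| ≤ B x := by
    intro n
    induction n with
    | zero =>
      intro x
      by_cases hx : x ∈ S
      · simpa using hB0 x hx
      · simpa using (tsum_nonneg fun n => abs_nonneg (W n x)).trans (hout x hx)
    | succ n ih =>
      intro x
      by_cases hx : x ∈ S
      · calc ∑ i ∈ range (n + 1), |W i x|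
            ≤ |W 0 x| + ∑' y, G x y * ∑ i ∈ range n, |W i y| :=
              sum_range_succ_abs_iterate_le hG hWrec n x
          _ ≤ |W 0 x| + ∑' y, G x y * B y := by
              gcongr 1
              exact (summable_mul_sum_range_abs_iterate hG hWrec n x).tsum_le_tsum
                (fun y => mul_le_mul_of_nonneg_left (ih y) (hG x y)) (hBsum x hx)
          _ ≤ B x := hsuper x hx
      · exact ((habs x).sum_le_tsum _ fun i _ => abs_nonneg _).trans (hout x hx)
  exact Real.tsum_le_of_sum_range_le (fun n => abs_nonneg _) fun n => hpartial n x

theorem tsum_mul_eq_sub_of_hasSum (hG : ∀ x y, 0 ≤ G x y)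
    (hWrec : ∀ n x, HasSum (fun y => G x y * W n y) (W (n + 1) x)) {u : Λ → ℝ}
    (hu : ∀ x, HasSum (fun n => W n x) (u x)) (x : Λ)
    (hU : Summable fun y => G x y * ∑' n, |W n y|) :
    ∑' y, G x y * u y = u x - W 0 x := by
  have hF : Summable (Function.uncurry fun y n => G x y * W n y) := by
    refine Summable.of_abs ((summable_prod_of_nonneg fun _ => abs_nonneg _).mpr ⟨fun y => ?_, ?_⟩)
    · simpa only [Function.uncurry, abs_mul] using (hu y).summable.abs.mul_left |G x y|
    · refine hU.congr fun y => ?_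
      simp only [Function.uncurry, abs_mul, abs_of_nonneg (hG x y), tsum_mul_left]
  calc ∑' y, G x y * u y = ∑' y, ∑' n, G x y * W n y :=
        tsum_congr fun y => by rw [← (hu y).tsum_eq, tsum_mul_left]
    _ = ∑' n, ∑' y, G x y * W n y := hF.tsum_comm.symm
    _ = ∑' n, W (n + 1) x := tsum_congr fun n => (hWrec n x).tsum_eq
    _ = u x - W 0 x := by simpa using ((hasSum_nat_add_iff' 1).mpr (hu x)).tsum_eq

end Iterates

namespace Matrix

section Nonneg

variable {m n : Type*} [Fintype n] {B : Matrix m n ℝ}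

theorem mulVec_apply_le_of_nonneg (hB : ∀ i j, 0 ≤ B i j)
    {x y : n → ℝ} (hxy : ∀ j, x j ≤ y j) (i : m) : (B *ᵥ x) i ≤ (B *ᵥ y) i :=
  sum_le_sum fun j _ => mul_le_mul_of_nonneg_left (hxy j) (hB i j)

theorem abs_mulVec_apply_le_of_nonneg (hB : ∀ i j, 0 ≤ B i j)
    (x : n → ℝ) (i : m) : |(B *ᵥ x) i| ≤ (B *ᵥ fun j => |x j|) i :=
  (abs_sum_le_sum_abs _ _).trans_eq <| sum_congr rfl fun j _ => by
    rw [abs_mul, abs_of_nonneg (hB i j)]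

end Nonneg

variable {n : Type*} [Fintype n] [DecidableEq n] {A : Matrix n n ℝ}

theorem sub_inv_mulVec_eq_inv_mulVec (hA : IsUnit A.det) {x c r : n → ℝ}
    (h : A *ᵥ x = c + r) : x - A⁻¹ *ᵥ c = A⁻¹ *ᵥ r :=
  calc x - A⁻¹ *ᵥ c = A⁻¹ *ᵥ (A *ᵥ x) - A⁻¹ *ᵥ c := by
        rw [mulVec_mulVec, nonsing_inv_mul _ hA, one_mulVec]
    _ = A⁻¹ *ᵥ r := by rw [h, mulVec_add, add_sub_cancel_left]

theorem isUnit_one_sub_of_tendsto_pow (hA : Tendsto (fun k : ℕ => A ^ k) atTop (𝓝 0)) :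
    IsUnit (1 - A) := by
  rw [← mulVec_injective_iff_isUnit]
  intro x y hxy
  have hfixed : A *ᵥ (x - y) = x - y := by
    have : (1 - A) *ᵥ (x - y) = 0 := by rw [mulVec_sub, hxy, sub_self]
    rwa [sub_mulVec, one_mulVec, sub_eq_zero, eq_comm] at this
  have hpow : ∀ k : ℕ, A ^ k *ᵥ (x - y) = x - y := by
    intro k
    induction k with
    | zero => simp
    | succ k ih => rw [pow_succ, ← mulVec_mulVec, hfixed, ih]
  have hlim : Tendsto (fun k : ℕ => A ^ k *ᵥ (x - y)) atTop (𝓝 (0 *ᵥ (x - y))) :=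
    ((continuous_id.matrix_mulVec continuous_const).tendsto 0).comp hA
  simp only [hpow, zero_mulVec, tendsto_const_nhds_iff] at hlim
  exact sub_eq_zero.mp hlim

theorem inv_one_sub_apply_nonneg (hA0 : ∀ i j, 0 ≤ A i j)
    (hA : Tendsto (fun k : ℕ => A ^ k) atTop (𝓝 0)) (i j : n) : 0 ≤ (1 - A)⁻¹ i j := by
  have hdet := (isUnit_iff_isUnit_det _).mp (isUnit_one_sub_of_tendsto_pow hA)
  -- `∑_{l<k} Aˡ = (1 - Aᵏ)(1 - A)⁻¹` is nonnegative and tends to `(1 - A)⁻¹`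
  have hgeom : ∀ k, ∑ l ∈ range k, A ^ l = (1 - A ^ k) * (1 - A)⁻¹ := fun k => by
    rw [← geom_sum_mul_neg, Matrix.mul_assoc, mul_nonsing_inv _ hdet, Matrix.mul_one]
  have hlim : Tendsto (fun k : ℕ => ((1 - A ^ k) * (1 - A)⁻¹) i j) atTop
      (𝓝 (((1 - 0) * (1 - A)⁻¹) i j)) :=
    ((continuous_id.matrix_elem i j).tendsto _).comp ((tendsto_const_nhds.sub hA).mul_const _)
  rw [sub_zero, Matrix.one_mul] at hlim
  refine ge_of_tendsto' hlim fun k => ?_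
  rw [← hgeom, sum_apply]
  exact sum_nonneg fun l _ => pow_apply_nonneg hA0 l i j

theorem inv_one_sub_mulVec_apply_nonneg (hA0 : ∀ i j, 0 ≤ A i j)
    (hA : Tendsto (fun k : ℕ => A ^ k) atTop (𝓝 0)) {x : n → ℝ} (hx : ∀ j, 0 ≤ x j) (i : n) :
    0 ≤ ((1 - A)⁻¹ *ᵥ x) i :=
  sum_nonneg fun j _ => mul_nonneg (inv_one_sub_apply_nonneg hA0 hA i j) (hx j)

theorem le_inv_one_sub_mulVec_of_le (hA0 : ∀ i j, 0 ≤ A i j)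
    (hA : Tendsto (fun k : ℕ => A ^ k) atTop (𝓝 0)) {x c : n → ℝ}
    (hx : ∀ i, x i ≤ c i + (A *ᵥ x) i) (i : n) : x i ≤ ((1 - A)⁻¹ *ᵥ c) i := by
  have hdet := (isUnit_iff_isUnit_det _).mp (isUnit_one_sub_of_tendsto_pow hA)
  calc x i = ((1 - A)⁻¹ *ᵥ ((1 - A) *ᵥ x)) i := by
        rw [mulVec_mulVec, nonsing_inv_mul _ hdet, one_mulVec]
    _ ≤ ((1 - A)⁻¹ *ᵥ c) i := by
        refine mulVec_apply_le_of_nonneg (inv_one_sub_apply_nonneg hA0 hA) (fun j => ?_) i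
        rw [sub_mulVec, one_mulVec, Pi.sub_apply]
        linarith [hx j]

end Matrix

section Lyapunov

variable {Λ K β : Type*} [Fintype K] {G : Λ → Λ → ℝ} {W : ℕ → Λ → ℝ}

theorem tsum_abs_iterate_le_of_lyapunov (e : Λ ≃ K ⊕ β) (hG : ∀ x y, 0 ≤ G x y)
    (hWrec : ∀ n x, HasSum (fun y => G x y * W n y) (W (n + 1) x))
    (habs : ∀ x, Summable fun n => |W n x|) {w : K → ℝ} {v ν : β → ℝ}
    (hv : ∀ x, 0 ≤ v x) (hν : ∀ x, 0 ≤ ν x)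
    (hvsum : ∀ x, Summable fun y => G (e.symm (.inr x)) (e.symm (.inr y)) * v y)
    (hLv : ∀ x, ∑' y, G (e.symm (.inr x)) (e.symm (.inr y)) * v y ≤ v x - |W 0 (e.symm (.inr x))|)
    (hνsum : ∀ x, Summable fun y => G (e.symm (.inr x)) (e.symm (.inr y)) * ν y)
    (hLν : ∀ x, ∑' y, G (e.symm (.inr x)) (e.symm (.inr y)) * ν y ≤
      ν x - ∑ k, G (e.symm (.inr x)) (e.symm (.inl k)) * w k)
    {M : ℝ} (hM : 0 ≤ M) (hK : ∀ k, ∑' n, |W n (e.symm (.inl k))| ≤ M * w k) (x : β) :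
    ∑' n, |W n (e.symm (.inr x))| ≤ v x + M * ν x := by
  set B : Λ → ℝ := fun z => Sum.elim (fun k => M * w k) (fun x => v x + M * ν x) (e z)
  have hrow : ∀ x, HasSum (fun z => G (e.symm (.inr x)) z * B z)
      (∑ k, G (e.symm (.inr x)) (e.symm (.inl k)) * B (e.symm (.inl k)) +
        (∑' y, G (e.symm (.inr x)) (e.symm (.inr y)) * v y +
          M * ∑' y, G (e.symm (.inr x)) (e.symm (.inr y)) * ν y)) := fun x =>
    hasSum_of_equiv_sum_fintype e <|
      ((hvsum x).hasSum.add ((hνsum x).hasSum.mul_left M)).congr_fun fun y => by simp [B]; ring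
  have hB : ∀ x, B (e.symm (.inr x)) = v x + M * ν x := fun x => by simp [B]
  refine hB x ▸ tsum_abs_iterate_le_of_supersolution hG hWrec habs (Set.range (e.symm ∘ .inr)) B
    ?_ ?_ ?_ ?_ (e.symm (.inr x))
  · rintro _ ⟨x, rfl⟩
    exact (hB x).symm ▸ add_nonneg (hv x) (mul_nonneg hM (hν x))
  · rintro _ ⟨x, rfl⟩
    exact (hrow x).summable
  · rintro _ ⟨x, rfl⟩
    have hKpart : ∑ k, G (e.symm (.inr x)) (e.symm (.inl k)) * B (e.symm (.inl k)) =
        M * ∑ k, G (e.symm (.inr x)) (e.symm (.inl k)) * w k := by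
      simp only [B, Equiv.apply_symm_apply, Sum.elim_inl, mul_sum, mul_left_comm]
    rw [Function.comp_apply, (hrow x).tsum_eq, hKpart, hB]
    linarith [hLv x, mul_le_mul_of_nonneg_left (hLν x) hM]
  · intro z hz
    obtain ⟨k | y, rfl⟩ := e.symm.surjective z
    · simpa [B] using hK k
    · exact absurd ⟨y, rfl⟩ hz

end Lyapunov

section Block

variable {κ A4 : Type*} [Fintype κ] {G : κ ⊕ A4 → κ ⊕ A4 → ℝ}
  {W : ℕ → κ ⊕ A4 → ℝ} {A : Matrix κ κ ℝ}

theorem summable_row_of_abs_le (hG : ∀ x y, 0 ≤ G x y) {f : κ ⊕ A4 → ℝ} {V : A4 → ℝ}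
    (hfV : ∀ y, |f (.inr y)| ≤ V y) (a : κ) (hV : Summable fun y => G (.inl a) (.inr y) * V y) :
    Summable fun z => G (.inl a) z * f z :=
  (HasSum.sum (f := fun z => G (.inl a) z * f z) (hasSum_fintype _)
    (summable_mul_of_abs_le (fun y => hG _ (.inr y)) hfV hV).hasSum).summable

theorem tsum_row_eq_mulVec_add (hA : ∀ a b, A a b = G (.inl a) (.inl b)) {f : κ ⊕ A4 → ℝ}
    (a : κ) (hf : Summable fun z => G (.inl a) z * f z) :
    ∑' z, G (.inl a) z * f z =
      (A *ᵥ fun b => f (.inl b)) a + ∑' y, G (.inl a) (.inr y) * f (.inr y) := by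
  rw [Summable.tsum_sum (hf.comp_injective Sum.inl_injective)
    (hf.comp_injective Sum.inr_injective), tsum_fintype]
  simp [mulVec, dotProduct, hA]

theorem summable_row_tsum_abs_iterate (hG : ∀ x y, 0 ≤ G x y) {V : A4 → ℝ}
    (hUV : ∀ y, ∑' n, |W n (.inr y)| ≤ V y) (a : κ)
    (hV : Summable fun y => G (.inl a) (.inr y) * V y) :
    Summable fun z => G (.inl a) z * ∑' n, |W n z| :=
  summable_row_of_abs_le hG
    (fun y => (abs_of_nonneg (tsum_nonneg fun _ => abs_nonneg _)).trans_le (hUV y)) a hV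

theorem tsum_abs_iterate_inl_le [DecidableEq κ] (hG : ∀ x y, 0 ≤ G x y)
    (hWrec : ∀ n x, HasSum (fun y => G x y * W n y) (W (n + 1) x))
    (habs : ∀ x, Summable fun n => |W n x|) (hA : ∀ a b, A a b = G (.inl a) (.inl b))
    (hpow : Tendsto (fun k : ℕ => A ^ k) atTop (𝓝 0)) {V : A4 → ℝ} {gV : κ → ℝ}
    (hUV : ∀ y, ∑' n, |W n (.inr y)| ≤ V y)
    (hgV : ∀ a, HasSum (fun y => G (.inl a) (.inr y) * V y) (gV a)) (a : κ) :
    ∑' n, |W n (.inl a)| ≤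
      ((1 - A)⁻¹ *ᵥ fun b => |W 0 (.inl b)|) a + ((1 - A)⁻¹ *ᵥ gV) a := by
  have hA0 : ∀ a b, 0 ≤ A a b := fun a b => hA a b ▸ hG _ _
  rw [← Pi.add_apply, ← mulVec_add]
  refine le_inv_one_sub_mulVec_of_le hA0 hpow (x := fun b => ∑' n, |W n (.inl b)|)
    (fun b => ?_) a
  have hrow := summable_row_tsum_abs_iterate hG hUV b (hgV b).summable
  have h4 : ∑' y, G (.inl b) (.inr y) * ∑' n, |W n (.inr y)| ≤ gV b :=
    (hgV b).tsum_eq ▸ (hrow.comp_injective Sum.inr_injective).tsum_le_tsum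
      (fun y => mul_le_mul_of_nonneg_left (hUV y) (hG _ _)) (hgV b).summable
  have := tsum_abs_iterate_le hG hWrec habs (.inl b) hrow
  rw [tsum_row_eq_mulVec_add hA b hrow] at this
  rw [Pi.add_apply]
  linarith

theorem abs_sub_inv_one_sub_mulVec_le [DecidableEq κ] (hG : ∀ x y, 0 ≤ G x y)
    (hWrec : ∀ n x, HasSum (fun y => G x y * W n y) (W (n + 1) x)) {u : κ ⊕ A4 → ℝ}
    (hu : ∀ x, HasSum (fun n => W n x) (u x)) (hA : ∀ a b, A a b = G (.inl a) (.inl b))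
    (hpow : Tendsto (fun k : ℕ => A ^ k) atTop (𝓝 0)) {V : A4 → ℝ} {gV : κ → ℝ}
    (hUV : ∀ y, ∑' n, |W n (.inr y)| ≤ V y)
    (hgV : ∀ a, HasSum (fun y => G (.inl a) (.inr y) * V y) (gV a)) (a : κ) :
    |u (.inl a) - ((1 - A)⁻¹ *ᵥ fun b => W 0 (.inl b)) a| ≤ ((1 - A)⁻¹ *ᵥ gV) a := by
  have hA0 : ∀ a b, 0 ≤ A a b := fun a b => hA a b ▸ hG _ _
  have hdet := (isUnit_iff_isUnit_det _).mp (isUnit_one_sub_of_tendsto_pow hpow)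
  have huV : ∀ y, |u (.inr y)| ≤ V y := fun y =>
    ((hu _).tsum_eq ▸ abs_tsum_le_tsum_abs (hu _).summable).trans (hUV y)
  set r : κ → ℝ := fun b => ∑' y, G (.inl b) (.inr y) * u (.inr y)
  have hfix : (1 - A) *ᵥ (fun b => u (.inl b)) = (fun b => W 0 (.inl b)) + r := by
    funext b
    have := tsum_mul_eq_sub_of_hasSum hG hWrec hu (.inl b)
      (summable_row_tsum_abs_iterate hG hUV b (hgV b).summable)
    rw [tsum_row_eq_mulVec_add hA b (summable_row_of_abs_le hG huV b (hgV b).summable)] at this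
    simp only [sub_mulVec, one_mulVec, Pi.sub_apply, Pi.add_apply, r]
    linarith
  have hInv0 := inv_one_sub_apply_nonneg hA0 hpow
  calc |u (.inl a) - ((1 - A)⁻¹ *ᵥ fun b => W 0 (.inl b)) a| = |((1 - A)⁻¹ *ᵥ r) a| := by
        rw [← sub_inv_mulVec_eq_inv_mulVec hdet hfix, Pi.sub_apply]
    _ ≤ ((1 - A)⁻¹ *ᵥ fun b => |r b|) a := abs_mulVec_apply_le_of_nonneg hInv0 r a
    _ ≤ ((1 - A)⁻¹ *ᵥ gV) a := mulVec_apply_le_of_nonneg hInv0 (fun b => (hgV b).tsum_eq ▸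
        abs_tsum_mul_le_of_abs_le (fun y => hG _ _) huV (hgV b).summable) a

end Block

noncomputable def weightedSupNorm {K : Type*} (w f : K → ℝ) : ℝ := ⨆ k, |f k| / w k

section WeightedSupNorm

variable {K : Type*} {w : K → ℝ}

theorem weightedSupNorm_nonneg (hw : ∀ k, 0 < w k) (f : K → ℝ) : 0 ≤ weightedSupNorm w f :=
  Real.iSup_nonneg fun k => div_nonneg (abs_nonneg _) (hw k).le

theorem abs_le_weightedSupNorm_mul [Finite K] (hw : ∀ k, 0 < w k) (f : K → ℝ) (k : K) :
    |f k| ≤ weightedSupNorm w f * w k :=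
  (div_le_iff₀ (hw k)).mp (le_ciSup (f := fun k => |f k| / w k) (Set.finite_range _).bddAbove k)

theorem weightedSupNorm_le (hw : ∀ k, 0 < w k) {f : K → ℝ} {C : ℝ} (hC : 0 ≤ C)
    (hf : ∀ k, |f k| ≤ C * w k) : weightedSupNorm w f ≤ C :=
  Real.iSup_le (fun k => (div_le_iff₀ (hw k)).mpr (hf k)) hC

theorem weightedSupNorm_le_div_one_sub [Finite K] (hw : ∀ k, 0 < w k) {f a b : K → ℝ}
    (hf0 : ∀ k, 0 ≤ f k) (hb : weightedSupNorm w b < 1)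
    (hf : ∀ k, f k ≤ a k + weightedSupNorm w f * b k) :
    weightedSupNorm w f ≤ weightedSupNorm w a / (1 - weightedSupNorm w b) := by
  set F := weightedSupNorm w f
  have hF0 : 0 ≤ F := weightedSupNorm_nonneg hw f
  have h : F ≤ weightedSupNorm w a + F * weightedSupNorm w b := by
    refine weightedSupNorm_le hw (add_nonneg (weightedSupNorm_nonneg hw a)
      (mul_nonneg hF0 (weightedSupNorm_nonneg hw b))) fun k => ?_
    calc |f k| = f k := abs_of_nonneg (hf0 k)
      _ ≤ a k + F * b k := hf k
      _ ≤ weightedSupNorm w a * w k + F * (weightedSupNorm w b * w k) := by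
          gcongr
          · exact (le_abs_self _).trans (abs_le_weightedSupNorm_mul hw a k)
          · exact (le_abs_self _).trans (abs_le_weightedSupNorm_mul hw b k)
      _ = (weightedSupNorm w a + F * weightedSupNorm w b) * w k := by ring
  rw [le_div_iff₀ (sub_pos.mpr hb)]
  linarith

end WeightedSupNorm

theorem stmt2_general {K A3 A4 : Type*}
    [Fintype K] [Fintype A3] [DecidableEq K] [DecidableEq A3]
    (G : ((K ⊕ A3) ⊕ A4) → ((K ⊕ A3) ⊕ A4) → ℝ)
    (hG : ∀ x y, 0 ≤ G x y)
    (h u : ((K ⊕ A3) ⊕ A4) → ℝ)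
    -- the series u* = ∑ Gⁿ h, converging absolutely componentwise
    (W : ℕ → ((K ⊕ A3) ⊕ A4) → ℝ)
    (hW0 : W 0 = h)
    (hWrec : ∀ n x, HasSum (fun y => G x y * W n y) (W (n + 1) x))
    (hu : ∀ x, HasSum (fun n : ℕ => W n x) (u x))
    -- the κ-block and its inverse 𝓘 = (I - G_{κκ})⁻¹
    (Gk : Matrix (K ⊕ A3) (K ⊕ A3) ℝ)
    (hGk : ∀ a b, Gk a b = G (Sum.inl a) (Sum.inl b))
    (hpow : Tendsto (fun n : ℕ => Gk ^ n) atTop (𝓝 0))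
    (Ic : Matrix (K ⊕ A3) (K ⊕ A3) ℝ) (hIc : Ic = (1 - Gk)⁻¹)
    -- weight and Lyapunov functions on β = Ã ⊕ A⁴
    (w : K → ℝ) (hw : ∀ k, 0 < w k)
    (ib : (A3 ⊕ A4) → ((K ⊕ A3) ⊕ A4))
    (hib : ib = Sum.elim (fun a => Sum.inl (Sum.inr a)) Sum.inr)
    (v ν : A3 ⊕ A4 → ℝ) (hv : ∀ x, 0 ≤ v x) (hν : ∀ x, 0 ≤ ν x)
    (hvsum : ∀ x, Summable (fun y : A3 ⊕ A4 => G (ib x) (ib y) * v y))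
    (hLv : ∀ x, ∑' y : A3 ⊕ A4, G (ib x) (ib y) * v y ≤ v x - |h (ib x)|)
    (hνsum : ∀ x, Summable (fun y : A3 ⊕ A4 => G (ib x) (ib y) * ν y))
    (hLν : ∀ x, ∑' y : A3 ⊕ A4, G (ib x) (ib y) * ν y ≤
      ν x - ∑ k : K, G (ib x) (Sum.inl (Sum.inl k)) * w k)
    -- the block products G_{κ4} v₄ and G_{κ4} ν₄
    (g4v g4ν : (K ⊕ A3) → ℝ)
    (hg4v : ∀ a, HasSum (fun y : A4 => G (Sum.inl a) (Sum.inr y) * v (Sum.inr y)) (g4v a))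
    (hg4ν : ∀ a, HasSum (fun y : A4 => G (Sum.inl a) (Sum.inr y) * ν (Sum.inr y)) (g4ν a))
    -- the contraction condition ‖𝓘₂ G₂₄ ν₄‖_w < 1 and the constant m(h)
    (hcontr : (⨆ k : K, |Ic.mulVec g4ν (Sum.inl k)| / w k) < 1)
    (m : ℝ)
    (hm : m =
      (⨆ k : K, |Ic.mulVec g4v (Sum.inl k) +
          Ic.mulVec (fun a => |h (Sum.inl a)|) (Sum.inl k)| / w k) /
        (1 - ⨆ k : K, |Ic.mulVec g4ν (Sum.inl k)| / w k))
    -- the truncated approximation ũ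
    (ut : ((K ⊕ A3) ⊕ A4) → ℝ)
    (hut : ut = Sum.elim (fun a => Ic.mulVec (fun b => h (Sum.inl b)) a) (fun _ => 0)) :
    (∀ a : K ⊕ A3,
      |u (Sum.inl a) - ut (Sum.inl a)| ≤ Ic.mulVec g4v a + Ic.mulVec g4ν a * m) ∧
    (∀ y : A4,
      |u (Sum.inr y) - ut (Sum.inr y)| ≤ v (Sum.inr y) + ν (Sum.inr y) * m) := by
  subst hW0 hut hIc
  obtain rfl : ib = fun x => (Equiv.sumAssoc K A3 A4).symm (.inr x) := by
    rw [hib]; funext x; rcases x with a | y <;> rfl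
  have habs : ∀ x, Summable fun n => |W n x| := fun x => (hu x).summable.abs
  set UK : K → ℝ := fun k => ∑' n, |W n (.inl (.inl k))|
  set M := weightedSupNorm w UK
  have hU4 : ∀ y, ∑' n, |W n (.inr y)| ≤ v (.inr y) + M * ν (.inr y) := fun y =>
    tsum_abs_iterate_le_of_lyapunov (Equiv.sumAssoc K A3 A4) hG hWrec habs hv hν hvsum hLv hνsum
      hLν (weightedSupNorm_nonneg hw UK)
      (fun k => (le_abs_self _).trans (abs_le_weightedSupNorm_mul hw UK k)) (.inr y)
  have hgV : ∀ a, HasSum (fun y => G (.inl a) (.inr y) * (v (.inr y) + M * ν (.inr y)))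
      ((g4v + M • g4ν) a) := fun a =>
    ((hg4v a).add ((hg4ν a).mul_left M)).congr_fun fun y => by ring
  have hIc : ∀ a, ((1 - Gk)⁻¹ *ᵥ (g4v + M • g4ν)) a =
      ((1 - Gk)⁻¹ *ᵥ g4v) a + M * ((1 - Gk)⁻¹ *ᵥ g4ν) a := fun a => by
    simp [mulVec_add, mulVec_smul]
  have hMm : M ≤ m := by
    rw [hm]
    refine weightedSupNorm_le_div_one_sub hw (fun k => tsum_nonneg fun _ => abs_nonneg _) hcontr
      fun k => ?_
    have hUk := tsum_abs_iterate_inl_le hG hWrec habs hGk hpow hU4 hgV (.inl k)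
    rw [hIc] at hUk
    linarith
  refine ⟨fun a => ?_, fun y => ?_⟩
  · have hIcν0 := inv_one_sub_mulVec_apply_nonneg (fun a b => hGk a b ▸ hG _ _) hpow
      (fun b => (hg4ν b).nonneg fun y => mul_nonneg (hG _ _) (hν _)) a
    rw [Sum.elim_inl]
    calc _ ≤ ((1 - Gk)⁻¹ *ᵥ g4v) a + M * ((1 - Gk)⁻¹ *ᵥ g4ν) a :=
          (abs_sub_inv_one_sub_mulVec_le hG hWrec hu hGk hpow hU4 hgV a).trans_eq (hIc a)
      _ ≤ _ := by rw [mul_comm M]; gcongr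
  · rw [Sum.elim_inr, sub_zero, mul_comm _ m]
    calc |u (.inr y)| ≤ ∑' n, |W n (.inr y)| :=
          (hu _).tsum_eq ▸ abs_tsum_le_tsum_abs (hu _).summable
      _ ≤ v (.inr y) + M * ν (.inr y) := hU4 y
      _ ≤ v (.inr y) + m * ν (.inr y) := by gcongr; exact hν _

/-- Theorem 1 of the paper: a posteriori error bounds for the truncated
solution of the nonnegative linear system `u = h + G u`.  The state space is
`Λ = (K' ⊕ Ã) ⊕ A⁴` with `K'`, `Ã` finite; `κ = K' ⊕ Ã`; `β = Ã ⊕ A⁴`.  The exact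
solution `u* = ∑_{n≥0} Gⁿ h` converges absolutely componentwise (encoded by the iterate
sequence `W`).  Given the Lyapunov functions `v, ν` on `β` satisfying
`G_{ββ} v ≤ v - |h_β|` and `G_{ββ} ν ≤ ν - G_{β2} w` for a positive weight `w` on `K'`,
and the contraction condition `‖𝓘₂ G₂₄ ν₄‖_w < 1`, the error `ε = u* - ũ` of the
truncated solution `ũ = 𝓘 h_κ` on `κ`, `0` on `A⁴` satisfies
`|ε_i| ≤ 𝓘_i G_{i4} v₄ + 𝓘_i G_{i4} ν₄ · m(h)` for `i = 2,3` and
`|ε₄| ≤ v₄ + ν₄ · m(h)`, with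
`m(h) = ‖𝓘₂ G₂₄ v₄ + 𝓘₂ |h₂|‖_w / (1 - ‖𝓘₂ G₂₄ ν₄‖_w)`. -/
theorem stmt2 {K A3 A4 : Type*}
    [Fintype K] [Fintype A3] [Nonempty K] [DecidableEq K] [DecidableEq A3]
    (G : ((K ⊕ A3) ⊕ A4) → ((K ⊕ A3) ⊕ A4) → ℝ)
    (hG : ∀ x y, 0 ≤ G x y)
    (h u : ((K ⊕ A3) ⊕ A4) → ℝ)
    -- the series u* = ∑ Gⁿ h, converging absolutely componentwise
    (W : ℕ → ((K ⊕ A3) ⊕ A4) → ℝ)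
    (hW0 : W 0 = h)
    (hWrec : ∀ n x, HasSum (fun y => G x y * W n y) (W (n + 1) x))
    (hWabs : ∀ n x, Summable (fun y => |G x y * W n y|))
    (habs : ∀ x, Summable (fun n : ℕ => |W n x|))
    (hu : ∀ x, HasSum (fun n : ℕ => W n x) (u x))
    -- the κ-block and its inverse 𝓘 = (I - G_{κκ})⁻¹
    (Gk : Matrix (K ⊕ A3) (K ⊕ A3) ℝ)
    (hGk : ∀ a b, Gk a b = G (Sum.inl a) (Sum.inl b))
    (hpow : Tendsto (fun n : ℕ => Gk ^ n) atTop (𝓝 0))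
    (Ic : Matrix (K ⊕ A3) (K ⊕ A3) ℝ) (hIc : Ic = (1 - Gk)⁻¹)
    -- weight and Lyapunov functions on β = Ã ⊕ A⁴
    (w : K → ℝ) (hw : ∀ k, 0 < w k)
    (ib : (A3 ⊕ A4) → ((K ⊕ A3) ⊕ A4))
    (hib : ib = Sum.elim (fun a => Sum.inl (Sum.inr a)) Sum.inr)
    (v ν : A3 ⊕ A4 → ℝ) (hv : ∀ x, 0 ≤ v x) (hν : ∀ x, 0 ≤ ν x)
    (hvsum : ∀ x, Summable (fun y : A3 ⊕ A4 => G (ib x) (ib y) * v y))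
    (hLv : ∀ x, ∑' y : A3 ⊕ A4, G (ib x) (ib y) * v y ≤ v x - |h (ib x)|)
    (hνsum : ∀ x, Summable (fun y : A3 ⊕ A4 => G (ib x) (ib y) * ν y))
    (hLν : ∀ x, ∑' y : A3 ⊕ A4, G (ib x) (ib y) * ν y ≤
      ν x - ∑ k : K, G (ib x) (Sum.inl (Sum.inl k)) * w k)
    -- the block products G_{κ4} v₄ and G_{κ4} ν₄
    (g4v g4ν : (K ⊕ A3) → ℝ)
    (hg4v : ∀ a, HasSum (fun y : A4 => G (Sum.inl a) (Sum.inr y) * v (Sum.inr y)) (g4v a))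
    (hg4ν : ∀ a, HasSum (fun y : A4 => G (Sum.inl a) (Sum.inr y) * ν (Sum.inr y)) (g4ν a))
    -- the contraction condition ‖𝓘₂ G₂₄ ν₄‖_w < 1 and the constant m(h)
    (hcontr : (⨆ k : K, |Ic.mulVec g4ν (Sum.inl k)| / w k) < 1)
    (m : ℝ)
    (hm : m =
      (⨆ k : K, |Ic.mulVec g4v (Sum.inl k) +
          Ic.mulVec (fun a => |h (Sum.inl a)|) (Sum.inl k)| / w k) /
        (1 - ⨆ k : K, |Ic.mulVec g4ν (Sum.inl k)| / w k))
    -- the truncated approximation ũ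
    (ut : ((K ⊕ A3) ⊕ A4) → ℝ)
    (hut : ut = Sum.elim (fun a => Ic.mulVec (fun b => h (Sum.inl b)) a) (fun _ => 0)) :
    (∀ a : K ⊕ A3,
      |u (Sum.inl a) - ut (Sum.inl a)| ≤ Ic.mulVec g4v a + Ic.mulVec g4ν a * m) ∧
    (∀ y : A4,
      |u (Sum.inr y) - ut (Sum.inr y)| ≤ v (Sum.inr y) + ν (Sum.inr y) * m) :=
  stmt2_general G hG h u W hW0 hWrec hu Gk hGk hpow Ic hIc w hw ib hib v ν hv hν hvsum hLv hνsum hLν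
    g4v g4ν hg4v hg4ν hcontr m hm ut hut
end
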